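/- The network-based redistribution mechanism (NRM) in trees runs no deficit: for every tree instance and every reported valuation profile, the surplus S = Σ_{i∈V} p_i of NRM is nonnegative. -/

import Mathlib

open Finset

attribute [local instance] Classical.propDecidable

noncomputable section

/-- A tree network rooted at a resource owner `o`: the agents are the elements of
the finite type `α`, and `parent i = none` means that the parent of agent `i` is
the owner `o` herself.  The field `depth` records the distance to the owner and
witnesses that the parent relation is well-founded. -/
structure TreeNet (α : Type) [Fintype α] [DecidableEq α] where
  parent : α → Option α
  depth : α → ℕ
  depth_root : ∀ i, parent i = none → depth i = 0
  depth_child : ∀ i j, parent i = some j → depth i = depth j + 1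

namespace TreeNet

variable {α : Type} [Fintype α] [DecidableEq α]

/-- `j` is a strict ancestor of `i`: iterating `parent` from `i` reaches `j`. -/
def StrictAnc (T : TreeNet α) (j i : α) : Prop :=
  ∃ m : ℕ, 0 < m ∧ (fun x : Option α => x.bind T.parent)^[m] (some i) = some j

/-- the subtree `V_i` of agent `i` inside the participant set `V`:
`i` together with all its descendants. -/
def sub (T : TreeNet α) (V : Finset α) (i : α) : Finset α :=
  V.filter fun x => x = i ∨ T.StrictAnc i x

/-- `n_i`, the number of agents in the subtree of `i`. -/
def nsub (T : TreeNet α) (V : Finset α) (i : α) : ℕ := (T.sub V i).card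

/-- `v^{(1)}_D`: the highest reported valuation in `D` (with the convention `0`
for `D = ∅`). -/
def vmax (val : α → ℝ) (D : Finset α) : ℝ :=
  if h : D.Nonempty then D.sup' h val else 0

/-- the list of strict ancestors of `i`, ordered by increasing depth. -/
def ancList (T : TreeNet α) (i : α) : List α :=
  match h : T.parent i with
  | none => []
  | some j => T.ancList j ++ [j]
termination_by T.depth i
decreasing_by
  have := T.depth_child i j h
  omega

/-- the full sequence `a_1, …, a_{k+1}`: the strict ancestors of the highest
bidder `hb` ordered by increasing depth, followed by `hb` itself. -/
def seq (T : TreeNet α) (hb : α) : List α := T.ancList hb ++ [hb]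

/-- `a_j`, as an `Option α`: `none` for `j = 0` (the owner `o`) and out of range. -/
def aIdx (T : TreeNet α) (hb : α) (j : ℕ) : Option α :=
  if j = 0 then none else (T.seq hb)[j - 1]?

/-- the required payment `p^{auc}_{a_j} = v^{(1)}_{V ∖ V_{a_j}}` (and `0` for `j = 0`). -/
def pauc (T : TreeNet α) (V : Finset α) (val : α → ℝ) (hb : α) (j : ℕ) : ℝ :=
  match T.aIdx hb j with
  | none => 0
  | some i => vmax val (V \ T.sub V i)

/-- the children inside `V` of a vertex (`none` denotes the owner `o`). -/
def childrenOf (T : TreeNet α) (V : Finset α) (x : Option α) : Finset α :=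
  V.filter fun y => T.parent y = x

/-- `X_j`: the set of children of `a_{j-1}`. -/
def X (T : TreeNet α) (V : Finset α) (hb : α) (j : ℕ) : Finset α :=
  T.childrenOf V (T.aIdx hb (j - 1))

/-- `n_{X_j} = Σ_{q ∈ X_j} n_q`. -/
def nX (T : TreeNet α) (V : Finset α) (hb : α) (j : ℕ) : ℕ :=
  ∑ q ∈ T.X V hb j, T.nsub V q

/-- subtree of an optional vertex, with the convention `∅` for `none`. -/
def subO (T : TreeNet α) (V : Finset α) : Option α → Finset α
  | none => ∅
  | some i => T.sub V i

/-- subtree of an optional vertex, with the convention `V` for the owner `o`. -/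
def subUp (T : TreeNet α) (V : Finset α) : Option α → Finset α
  | none => V
  | some i => T.sub V i

/-- `S_{-q}` at step `j`, where `sel` selects a highest bidder in a given set
(`h' = sel (V ∖ V_q)` is a highest bidder without `q`'s participation). -/
def Sneg (T : TreeNet α) (V : Finset α) (val : α → ℝ) (sel : Finset α → Option α)
    (hb : α) (j : ℕ) (q : α) : ℝ :=
  match sel (V \ T.sub V q) with
  | none => 0
  | some h' =>
      if T.aIdx h' (j - 1) = T.aIdx hb (j - 1) then
        vmax val (V \ (T.subO V (T.aIdx h' j) ∪ T.sub V q)) - T.pauc V val hb (j - 1)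
      else 0

/-- the money `R_q = (n_q / n_{X_j}) ⬝ S_{-q}` redistributed to `q` in step `j`. -/
def R (T : TreeNet α) (V : Finset α) (val : α → ℝ) (sel : Finset α → Option α)
    (hb : α) (j : ℕ) (q : α) : ℝ :=
  (T.nsub V q : ℝ) / (T.nX V hb j : ℝ) * T.Sneg V val sel hb j q

/-- the allocation condition `v̂_{a_j} ≥ p^{auc}_{a_j}` holds at step `j`. -/
def Stops (T : TreeNet α) (V : Finset α) (val : α → ℝ) (hb : α) (j : ℕ) : Prop :=
  ∃ i, T.aIdx hb j = some i ∧ T.pauc V val hb j ≤ val i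

/-- the step `J` at which the procedure stops. -/
def stepJ (T : TreeNet α) (V : Finset α) (val : α → ℝ) (hb : α) : ℕ :=
  sInf {j | 1 ≤ j ∧ T.Stops V val hb j}

/-- the winner of the item. -/
def winner (T : TreeNet α) (V : Finset α) (val : α → ℝ) (hb : α) : Option α :=
  T.aIdx hb (T.stepJ V val hb)

/-- the (first) step at which agent `i` is assigned a payment. -/
def stepOf (T : TreeNet α) (V : Finset α) (val : α → ℝ) (hb : α) (i : α) : ℕ :=
  sInf {j | 1 ≤ j ∧ j ≤ T.stepJ V val hb ∧ i ∈ T.X V hb j}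

/-- the payment of agent `i` under NRM: the winner pays `p^{auc}_{a_J} - R_{a_J}`,
every other agent considered in some executed step `j` pays `-R_q`, and every
agent not assigned a payment pays `0`. -/
def pay (T : TreeNet α) (V : Finset α) (val : α → ℝ) (sel : Finset α → Option α)
    (hb : α) (i : α) : ℝ :=
  if T.winner V val hb = some i then
    T.pauc V val hb (T.stepJ V val hb) - T.R V val sel hb (T.stepJ V val hb) i
  else if ∃ j, 1 ≤ j ∧ j ≤ T.stepJ V val hb ∧ i ∈ T.X V hb j then
    -T.R V val sel hb (T.stepOf V val hb i) i
  else 0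

/-- the surplus `S = Σ_{i ∈ V} p_i` of the mechanism. -/
def surplus (T : TreeNet α) (V : Finset α) (val : α → ℝ) (sel : Finset α → Option α)
    (hb : α) : ℝ :=
  ∑ i ∈ V, T.pay V val sel hb i

/-- the utility of agent `i` whose true valuation is `tv`:
`tv` if she wins, minus her payment. -/
def util (T : TreeNet α) (V : Finset α) (val : α → ℝ) (sel : Finset α → Option α)
    (hb : α) (tv : ℝ) (i : α) : ℝ :=
  (if T.winner V val hb = some i then tv else 0) - T.pay V val sel hb i

/-- the participant set `V` is closed under taking parents
(as is every set generated by invitation chains). -/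
def Closed (T : TreeNet α) (V : Finset α) : Prop :=
  ∀ i ∈ V, ∀ j, T.parent i = some j → j ∈ V

/-- `hb` is a highest bidder of `V`. -/
def IsTop (V : Finset α) (val : α → ℝ) (hb : α) : Prop :=
  hb ∈ V ∧ ∀ i ∈ V, val i ≤ val hb

/-- `sel` selects a highest bidder of every nonempty finite set of agents. -/
def SelValid (val : α → ℝ) (sel : Finset α → Option α) : Prop :=
  ∀ D : Finset α, (D.Nonempty → ∃ b, sel D = some b) ∧
    ∀ b, sel D = some b → b ∈ D ∧ ∀ x ∈ D, val x ≤ val b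

/-- the true neighbour set of agent `i` that she may invite: her children. -/
def childrenAll (T : TreeNet α) (i : α) : Finset α :=
  Finset.univ.filter fun y => T.parent y = some i

/-- agent `i` is reached from the owner by the chains of invitations `inv`
(the owner informs all her neighbours, i.e. the agents with `parent = none`). -/
def Reached (T : TreeNet α) (inv : α → Finset α) (i : α) : Prop :=
  match h : T.parent i with
  | none => True
  | some j => T.Reached inv j ∧ i ∈ inv j
termination_by T.depth i
decreasing_by
  have := T.depth_child i j h
  omega

/-- the participant set generated by the invitations `inv`. -/
def Vgen (T : TreeNet α) (inv : α → Finset α) : Finset α :=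
  Finset.univ.filter fun i => T.Reached inv i

end TreeNet

/-!
Along the path `o = a_0, a_1, …, a_J` from the owner to the winner the auction prices
`p^{auc}_{a_j}` increase, and the surplus is `p^{auc}_{a_J}` minus everything redistributed.
In step `j` each `S_{-q}` is at most the price increment `p^{auc}_{a_j} - p^{auc}_{a_{j-1}}`.
Indeed, a bid from `V_{a_j}` survives in the set defining `S_{-q}` only if the highest bidder
`h'` of `V ∖ V_q` lies outside `V_{a_j}` (otherwise `a'_j = a_j`), and then it is at most
`v̂_{h'} ≤ p^{auc}_{a_j}`; bids outside `V_{a_j}` are at most `p^{auc}_{a_j}` anyway.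
The weights `n_q / n_{X_j}` sum to at most one, so step `j` redistributes at most the
increment, and the increments telescope to `p^{auc}_{a_J}`.
-/

theorem sum_div_sum_mul_le {ι : Type*} (s : Finset ι) {w S : ι → ℝ} {c : ℝ}
    (hw : ∀ i ∈ s, 0 ≤ w i) (hS : ∀ i ∈ s, S i ≤ c) (hc : 0 ≤ c) :
    ∑ i ∈ s, w i / (∑ k ∈ s, w k) * S i ≤ c := by
  have hW : 0 ≤ ∑ k ∈ s, w k := sum_nonneg hw
  calc ∑ i ∈ s, w i / (∑ k ∈ s, w k) * S i
      ≤ ∑ i ∈ s, w i / (∑ k ∈ s, w k) * c :=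
        sum_le_sum fun i hi => mul_le_mul_of_nonneg_left (hS i hi) (div_nonneg (hw i hi) hW)
    _ = (∑ k ∈ s, w k) / (∑ k ∈ s, w k) * c := by rw [← sum_mul, ← sum_div]
    _ ≤ c := mul_le_of_le_one_left hc (div_self_le_one _)

namespace TreeNet

variable {α : Type}

lemma le_vmax {val : α → ℝ} {D : Finset α} {x : α} (h : x ∈ D) : val x ≤ vmax val D := by
  rw [vmax, dif_pos ⟨x, h⟩]
  exact le_sup' val h

lemma vmax_le {val : α → ℝ} {D : Finset α} {c : ℝ} (hc : 0 ≤ c) (h : ∀ x ∈ D, val x ≤ c) :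
    vmax val D ≤ c := by
  rw [vmax]
  split_ifs
  · exact sup'_le _ _ h
  · exact hc

lemma vmax_nonneg {val : α → ℝ} {D : Finset α} (h : ∀ x ∈ D, 0 ≤ val x) : 0 ≤ vmax val D := by
  rw [vmax]
  split_ifs with hD
  · obtain ⟨x, hx⟩ := hD
    exact (h x hx).trans (le_sup' val hx)
  · exact le_rfl

lemma vmax_mono {val : α → ℝ} {D D' : Finset α} (hD' : ∀ x ∈ D', 0 ≤ val x) (h : D ⊆ D') :
    vmax val D ≤ vmax val D' :=
  vmax_le (vmax_nonneg hD') fun _ hx => le_vmax (h hx)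

variable [Fintype α] [DecidableEq α] (T : TreeNet α)

@[elab_as_elim]
theorem parent_induction {P : α → Prop} (root : ∀ i, T.parent i = none → P i)
    (step : ∀ i p, T.parent i = some p → P p → P i) (i : α) : P i := by
  induction hd : T.depth i using Nat.strong_induction_on generalizing i with
  | _ n ih =>
    cases hp : T.parent i with
    | none => exact root i hp
    | some p => exact step i p hp (ih _ (by have := T.depth_child i p hp; omega) p rfl)

def ascend : Option α → Option α := fun x => x.bind T.parent

lemma ascend_some (i : α) : T.ascend (some i) = T.parent i := rfl

lemma iterate_ascend_none (m : ℕ) : T.ascend^[m] none = none :=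
  Function.iterate_fixed rfl m

lemma depth_add_of_iterate_ascend {m : ℕ} {i j : α} (h : T.ascend^[m] (some i) = some j) :
    T.depth j + m = T.depth i := by
  induction m generalizing i with
  | zero => cases h; rfl
  | succ m ih =>
    rw [Function.iterate_succ_apply, ascend_some] at h
    cases hp : T.parent i with
    | none => rw [hp, iterate_ascend_none] at h; cases h
    | some p =>
      rw [hp] at h
      have := ih h
      have := T.depth_child i p hp
      omega

lemma exists_iterate_ascend_eq_some {m : ℕ} {i : α} (hm : m ≤ T.depth i) :
    ∃ j, T.ascend^[m] (some i) = some j := by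
  induction m generalizing i with
  | zero => exact ⟨i, rfl⟩
  | succ m ih =>
    cases hp : T.parent i with
    | none => have := T.depth_root i hp; omega
    | some p =>
      have := T.depth_child i p hp
      rw [Function.iterate_succ_apply, ascend_some, hp]
      exact ih (by omega)

variable {T} in
lemma Closed.mem_of_iterate_ascend {V : Finset α} (hV : T.Closed V) {m : ℕ} {i j : α}
    (hi : i ∈ V) (h : T.ascend^[m] (some i) = some j) : j ∈ V := by
  induction m generalizing i with
  | zero => cases h; exact hi
  | succ m ih =>
    rw [Function.iterate_succ_apply, ascend_some] at h
    cases hp : T.parent i with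
    | none => rw [hp, iterate_ascend_none] at h; cases h
    | some p => rw [hp] at h; exact ih (hV i hi p hp) h

lemma mem_sub_iff {V : Finset α} {i x : α} :
    x ∈ T.sub V i ↔ x ∈ V ∧ ∃ m, T.ascend^[m] (some x) = some i := by
  rw [sub, mem_filter]
  refine and_congr_right fun _ => ⟨?_, ?_⟩
  · rintro (rfl | ⟨m, -, hm⟩)
    · exact ⟨0, rfl⟩
    · exact ⟨m, hm⟩
  · rintro ⟨_ | m, hm⟩
    · cases hm; exact Or.inl rfl
    · exact Or.inr ⟨m + 1, m.succ_pos, hm⟩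

lemma sub_subset_sub_of_parent (V : Finset α) {a b : α} (h : T.parent b = some a) :
    T.sub V b ⊆ T.sub V a := by
  intro x hx
  obtain ⟨hxV, m, hm⟩ := T.mem_sub_iff.mp hx
  refine T.mem_sub_iff.mpr ⟨hxV, m + 1, ?_⟩
  rw [Function.iterate_succ_apply', hm, ascend_some, h]

lemma seq_of_parent_eq_none {i : α} (h : T.parent i = none) : T.seq i = [i] := by
  rw [seq, ancList]; split <;> simp_all

lemma seq_of_parent_eq_some {i p : α} (h : T.parent i = some p) :
    T.seq i = T.seq p ++ [i] := by
  rw [seq, ancList]; split <;> simp_all [seq]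

lemma length_seq (i : α) : (T.seq i).length = T.depth i + 1 := by
  induction i using T.parent_induction with
  | root i h => rw [T.seq_of_parent_eq_none h, T.depth_root i h]; rfl
  | step i p h ih => rw [T.seq_of_parent_eq_some h, List.length_append, ih, T.depth_child i p h]; rfl

lemma getElem?_seq (i : α) {m : ℕ} (hm : m ≤ T.depth i) :
    (T.seq i)[m]? = T.ascend^[T.depth i - m] (some i) := by
  induction i using T.parent_induction generalizing m with
  | root i h =>
    rw [T.depth_root i h] at hm ⊢
    obtain rfl : m = 0 := by omega
    rw [T.seq_of_parent_eq_none h]; rfl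
  | step i p h ih =>
    have hd := T.depth_child i p h
    rw [T.seq_of_parent_eq_some h]
    rcases Nat.lt_or_ge m (T.depth i) with hlt | hge
    · rw [List.getElem?_append_left (by rw [length_seq]; omega), ih (by omega),
        show T.depth i - m = T.depth p - m + 1 by omega, Function.iterate_succ_apply, ascend_some, h]
    · obtain rfl : m = T.depth i := by omega
      rw [hd, ← length_seq, List.getElem?_concat_length, Nat.sub_self]; rfl

lemma aIdx_zero (hb : α) : T.aIdx hb 0 = none := rfl

lemma aIdx_eq_iterate {hb : α} {j : ℕ} (h1 : 1 ≤ j) (h2 : j ≤ T.depth hb + 1) :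
    T.aIdx hb j = T.ascend^[T.depth hb + 1 - j] (some hb) := by
  rw [aIdx, if_neg (by omega), T.getElem?_seq hb (by omega)]
  congr 1
  omega

lemma aIdx_eq_some_iff {hb a : α} {j : ℕ} :
    T.aIdx hb j = some a ↔ j = T.depth a + 1 ∧ ∃ m, T.ascend^[m] (some hb) = some a := by
  constructor
  · intro h
    have h1 : j ≠ 0 := by rintro rfl; cases h
    have h2 : j ≤ T.depth hb + 1 := by
      by_contra h2
      rw [aIdx, if_neg h1, List.getElem?_eq_none (by rw [length_seq]; omega)] at h
      cases h
    rw [T.aIdx_eq_iterate (by omega) h2] at h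
    have := T.depth_add_of_iterate_ascend h
    exact ⟨by omega, _, h⟩
  · rintro ⟨rfl, m, hm⟩
    have := T.depth_add_of_iterate_ascend hm
    rwa [T.aIdx_eq_iterate (by omega) (by omega),
      show T.depth hb + 1 - (T.depth a + 1) = m by omega]

lemma exists_aIdx_eq_some {hb : α} {j : ℕ} (h1 : 1 ≤ j) (h2 : j ≤ T.depth hb + 1) :
    ∃ a, T.aIdx hb j = some a := by
  rw [T.aIdx_eq_iterate h1 h2]
  exact T.exists_iterate_ascend_eq_some (by omega)

lemma aIdx_eq_none_iff {hb : α} {j : ℕ} (h : j ≤ T.depth hb + 1) :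
    T.aIdx hb j = none ↔ j = 0 := by
  refine ⟨fun hj => ?_, fun hj => hj ▸ T.aIdx_zero hb⟩
  by_contra h0
  obtain ⟨a, ha⟩ := T.exists_aIdx_eq_some (by omega) h
  rw [ha] at hj
  cases hj

lemma aIdx_depth_add_one (hb : α) : T.aIdx hb (T.depth hb + 1) = some hb :=
  T.aIdx_eq_some_iff.mpr ⟨rfl, 0, rfl⟩

lemma aIdx_of_mem_sub {V : Finset α} {a x : α} (h : x ∈ T.sub V a) :
    T.aIdx x (T.depth a + 1) = some a :=
  T.aIdx_eq_some_iff.mpr ⟨rfl, (T.mem_sub_iff.mp h).2⟩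

lemma parent_of_aIdx_eq_some {hb a : α} {j : ℕ} (h : T.aIdx hb j = some a) :
    T.parent a = T.aIdx hb (j - 1) := by
  obtain ⟨rfl, m, hm⟩ := T.aIdx_eq_some_iff.mp h
  cases hp : T.parent a with
  | none => rw [T.depth_root a hp]; rfl
  | some p =>
    refine (T.aIdx_eq_some_iff.mpr ⟨?_, m + 1, ?_⟩).symm
    · have := T.depth_child a p hp
      omega
    · rw [Function.iterate_succ_apply', hm, ascend_some, hp]

lemma mem_X_iff {V : Finset α} {hb q : α} {j : ℕ} :
    q ∈ T.X V hb j ↔ q ∈ V ∧ T.parent q = T.aIdx hb (j - 1) := by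
  rw [X, childrenOf, mem_filter]

variable {T} in
lemma Closed.mem_X_of_aIdx_eq_some {V : Finset α} (hV : T.Closed V) {hb a : α} (hhbV : hb ∈ V)
    {j : ℕ} (h : T.aIdx hb j = some a) : a ∈ T.X V hb j := by
  obtain ⟨-, m, hm⟩ := T.aIdx_eq_some_iff.mp h
  exact T.mem_X_iff.mpr ⟨hV.mem_of_iterate_ascend hhbV hm, T.parent_of_aIdx_eq_some h⟩

lemma eq_of_mem_X_of_mem_X {V : Finset α} {hb q : α} {j j' : ℕ}
    (h1 : 1 ≤ j) (h2 : j ≤ T.depth hb + 1) (h1' : 1 ≤ j') (h2' : j' ≤ T.depth hb + 1)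
    (hq : q ∈ T.X V hb j) (hq' : q ∈ T.X V hb j') : j = j' := by
  have e := (T.mem_X_iff.mp hq).2.symm.trans (T.mem_X_iff.mp hq').2
  cases ha : T.aIdx hb (j - 1) with
  | none =>
    rw [ha] at e
    have := (T.aIdx_eq_none_iff (by omega)).mp ha
    have := (T.aIdx_eq_none_iff (by omega)).mp e.symm
    omega
  | some a =>
    rw [ha] at e
    have := (T.aIdx_eq_some_iff.mp ha).1
    have := (T.aIdx_eq_some_iff.mp e.symm).1
    omega

lemma pairwiseDisjoint_X (V : Finset α) {hb : α} {n : ℕ} (hn : n ≤ T.depth hb + 1) :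
    (↑(Icc 1 n) : Set ℕ).PairwiseDisjoint (T.X V hb) := by
  intro j hj j' hj' hne
  rw [coe_Icc, Set.mem_Icc] at hj hj'
  exact disjoint_left.mpr fun q hq hq' =>
    hne (T.eq_of_mem_X_of_mem_X hj.1 (by omega) hj'.1 (by omega) hq hq')


lemma pauc_of_aIdx_eq_some (V : Finset α) (val : α → ℝ) {hb a : α} {j : ℕ}
    (h : T.aIdx hb j = some a) : T.pauc V val hb j = vmax val (V \ T.sub V a) := by
  rw [pauc, h]

lemma pauc_le_pauc_succ {V : Finset α} {val : α → ℝ} (hval : ∀ i ∈ V, 0 ≤ val i) {hb : α}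
    {j : ℕ} (hj : j ≤ T.depth hb) : T.pauc V val hb j ≤ T.pauc V val hb (j + 1) := by
  have hval' : ∀ D, ∀ x ∈ V \ D, 0 ≤ val x := fun _ x hx => hval x (mem_sdiff.mp hx).1
  obtain ⟨a, ha⟩ := T.exists_aIdx_eq_some (hb := hb) (j := j + 1) (by omega) (by omega)
  rw [T.pauc_of_aIdx_eq_some V val ha]
  cases hb' : T.aIdx hb j with
  | none => rw [pauc, hb']; exact vmax_nonneg (hval' _)
  | some b =>
    have hab : T.parent a = some b := (T.parent_of_aIdx_eq_some ha).trans hb'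
    rw [T.pauc_of_aIdx_eq_some V val hb']
    exact vmax_mono (hval' _) (sdiff_subset_sdiff subset_rfl (T.sub_subset_sub_of_parent V hab))

lemma vmax_sdiff_le_of_isTop {V : Finset α} {val : α → ℝ} (hval : ∀ i ∈ V, 0 ≤ val i)
    {q h' a : α} (htop : IsTop (V \ T.sub V q) val h') :
    vmax val (V \ (T.subO V (T.aIdx h' (T.depth a + 1)) ∪ T.sub V q)) ≤
      vmax val (V \ T.sub V a) := by
  refine vmax_le (vmax_nonneg fun x hx => hval x (mem_sdiff.mp hx).1) fun x hx => ?_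
  obtain ⟨hxV, hx'⟩ := mem_sdiff.mp hx
  rw [mem_union, not_or] at hx'
  by_cases hxa : x ∈ T.sub V a
  · have hh' : h' ∉ T.sub V a := fun hh' => hx'.1 (by rw [T.aIdx_of_mem_sub hh']; exact hxa)
    calc val x ≤ val h' := htop.2 x (mem_sdiff.mpr ⟨hxV, hx'.2⟩)
      _ ≤ vmax val (V \ T.sub V a) := le_vmax (mem_sdiff.mpr ⟨(mem_sdiff.mp htop.1).1, hh'⟩)
  · exact le_vmax (mem_sdiff.mpr ⟨hxV, hxa⟩)

lemma Sneg_le {V : Finset α} {val : α → ℝ} (hval : ∀ i ∈ V, 0 ≤ val i)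
    {sel : Finset α → Option α} (hsel : SelValid val sel) {hb : α} {j : ℕ}
    (hj : j ≤ T.depth hb) (q : α) :
    T.Sneg V val sel hb (j + 1) q ≤ T.pauc V val hb (j + 1) - T.pauc V val hb j := by
  have hΔ := sub_nonneg.mpr (T.pauc_le_pauc_succ hval hj)
  obtain ⟨a, ha⟩ := T.exists_aIdx_eq_some (hb := hb) (j := j + 1) (by omega) (by omega)
  obtain ⟨hja, -⟩ := T.aIdx_eq_some_iff.mp ha
  cases hse : sel (V \ T.sub V q) with
  | none => simp only [Sneg, hse]; exact hΔ
  | some h' =>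
    simp only [Sneg, hse, Nat.add_sub_cancel]
    split_ifs
    · rw [T.pauc_of_aIdx_eq_some V val ha, hja]
      exact sub_le_sub_right (T.vmax_sdiff_le_of_isTop hval ((hsel _).2 h' hse)) _
    · exact hΔ

lemma sum_R_le {V : Finset α} {val : α → ℝ} (hval : ∀ i ∈ V, 0 ≤ val i)
    {sel : Finset α → Option α} (hsel : SelValid val sel) {hb : α} {j : ℕ}
    (hj : j ≤ T.depth hb) :
    ∑ q ∈ T.X V hb (j + 1), T.R V val sel hb (j + 1) q ≤
      T.pauc V val hb (j + 1) - T.pauc V val hb j := by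
  simp only [R, nX, Nat.cast_sum]
  exact sum_div_sum_mul_le _ (fun _ _ => Nat.cast_nonneg _) (fun q _ => T.Sneg_le hval hsel hj q)
    (sub_nonneg.mpr (T.pauc_le_pauc_succ hval hj))

lemma sum_Icc_sum_R_le_pauc {V : Finset α} {val : α → ℝ} (hval : ∀ i ∈ V, 0 ≤ val i)
    {sel : Finset α → Option α} (hsel : SelValid val sel) {hb : α} {n : ℕ}
    (hn : n ≤ T.depth hb + 1) :
    ∑ j ∈ Icc 1 n, ∑ q ∈ T.X V hb j, T.R V val sel hb j q ≤ T.pauc V val hb n := by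
  induction n with
  | zero => simp [pauc, aIdx_zero]
  | succ n ih =>
    rw [sum_Icc_succ_top (by omega)]
    linarith [ih (by omega), T.sum_R_le hval hsel (hb := hb) (j := n) (by omega)]


lemma stops_depth_add_one {V : Finset α} {val : α → ℝ} (hval : ∀ i ∈ V, 0 ≤ val i) {hb : α}
    (hhb : IsTop V val hb) : T.Stops V val hb (T.depth hb + 1) := by
  refine ⟨hb, T.aIdx_depth_add_one hb, ?_⟩
  rw [T.pauc_of_aIdx_eq_some V val (T.aIdx_depth_add_one hb)]
  exact vmax_le (hval hb hhb.1) fun x hx => hhb.2 x (mem_sdiff.mp hx).1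

lemma one_le_stepJ {V : Finset α} {val : α → ℝ} {hb : α} {n : ℕ} (h1 : 1 ≤ n)
    (h : T.Stops V val hb n) : 1 ≤ T.stepJ V val hb :=
  (Nat.sInf_mem (⟨n, h1, h⟩ : {j | 1 ≤ j ∧ T.Stops V val hb j}.Nonempty)).1

lemma stepJ_le {V : Finset α} {val : α → ℝ} {hb : α} {n : ℕ} (h1 : 1 ≤ n)
    (h : T.Stops V val hb n) : T.stepJ V val hb ≤ n :=
  Nat.sInf_le ⟨h1, h⟩

section Payments

variable {V : Finset α} {val : α → ℝ} {sel : Finset α → Option α} {hb : α}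

lemma stepOf_eq (hJ : T.stepJ V val hb ≤ T.depth hb + 1) {i : α} {j : ℕ} (hj1 : 1 ≤ j)
    (hjJ : j ≤ T.stepJ V val hb) (hi : i ∈ T.X V hb j) : T.stepOf V val hb i = j := by
  obtain ⟨h1, h2, hX⟩ := Nat.sInf_mem (⟨j, hj1, hjJ, hi⟩ :
    {j' | 1 ≤ j' ∧ j' ≤ T.stepJ V val hb ∧ i ∈ T.X V hb j'}.Nonempty)
  exact T.eq_of_mem_X_of_mem_X h1 (h2.trans hJ) hj1 (hjJ.trans hJ) hX hi

lemma pay_eq (hV : T.Closed V) (hhbV : hb ∈ V) (h1 : 1 ≤ T.stepJ V val hb)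
    (hJ : T.stepJ V val hb ≤ T.depth hb + 1) (i : α) :
    T.pay V val sel hb i =
      (if T.winner V val hb = some i then T.pauc V val hb (T.stepJ V val hb) else 0) -
      (if ∃ j, 1 ≤ j ∧ j ≤ T.stepJ V val hb ∧ i ∈ T.X V hb j then
        T.R V val sel hb (T.stepOf V val hb i) i else 0) := by
  by_cases hw : T.winner V val hb = some i
  · have hiX : i ∈ T.X V hb (T.stepJ V val hb) := hV.mem_X_of_aIdx_eq_some hhbV hw
    rw [pay, if_pos hw, if_pos hw, if_pos ⟨_, h1, le_rfl, hiX⟩, T.stepOf_eq hJ h1 le_rfl hiX]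
  · rw [pay, if_neg hw, if_neg hw, zero_sub]
    split_ifs <;> simp

lemma sum_redistributed_eq (hJ : T.stepJ V val hb ≤ T.depth hb + 1) :
    ∑ i ∈ V, (if ∃ j, 1 ≤ j ∧ j ≤ T.stepJ V val hb ∧ i ∈ T.X V hb j then
        T.R V val sel hb (T.stepOf V val hb i) i else 0) =
      ∑ j ∈ Icc 1 (T.stepJ V val hb), ∑ i ∈ T.X V hb j, T.R V val sel hb j i := by
  have hB : V.filter (fun i => ∃ j, 1 ≤ j ∧ j ≤ T.stepJ V val hb ∧ i ∈ T.X V hb j) =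
      (Icc 1 (T.stepJ V val hb)).biUnion (T.X V hb) := by
    ext i
    simp only [mem_filter, mem_biUnion, mem_Icc]
    constructor
    · rintro ⟨-, j, h1, h2, hX⟩
      exact ⟨j, ⟨h1, h2⟩, hX⟩
    · rintro ⟨j, ⟨h1, h2⟩, hX⟩
      exact ⟨(T.mem_X_iff.mp hX).1, j, h1, h2, hX⟩
  rw [← sum_filter, hB, sum_biUnion (T.pairwiseDisjoint_X V hJ)]
  refine sum_congr rfl fun j hj => sum_congr rfl fun i hi => ?_
  rw [mem_Icc] at hj
  rw [T.stepOf_eq hJ hj.1 hj.2 hi]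

lemma surplus_eq (hV : T.Closed V) (hhbV : hb ∈ V) (h1 : 1 ≤ T.stepJ V val hb)
    (hJ : T.stepJ V val hb ≤ T.depth hb + 1) :
    T.surplus V val sel hb = T.pauc V val hb (T.stepJ V val hb) -
      ∑ j ∈ Icc 1 (T.stepJ V val hb), ∑ i ∈ T.X V hb j, T.R V val sel hb j i := by
  obtain ⟨a, ha⟩ := T.exists_aIdx_eq_some h1 hJ
  have haV : a ∈ V := (T.mem_X_iff.mp (hV.mem_X_of_aIdx_eq_some hhbV ha)).1
  rw [surplus, sum_congr rfl fun i _ => T.pay_eq hV hhbV h1 hJ i, sum_sub_distrib,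
    T.sum_redistributed_eq hJ, winner, ha]
  simp only [Option.some.injEq, sum_ite_eq, if_pos haV]

end Payments

end TreeNet

/-- The network-based redistribution mechanism in trees runs no
deficit: on every tree instance and every reported valuation profile, the
surplus `S = Σ_{i ∈ V} p_i` of NRM is nonnegative. -/
theorem TreeNet.nrm_tree_non_deficit
    {α : Type} [Fintype α] [DecidableEq α] (T : TreeNet α)
    (V : Finset α) (hV : T.Closed V)
    (val : α → ℝ) (hval : ∀ i ∈ V, 0 ≤ val i)
    (sel : Finset α → Option α) (hsel : TreeNet.SelValid val sel)
    (hb : α) (hhb : TreeNet.IsTop V val hb) :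
    0 ≤ T.surplus V val sel hb := by
  have hstop := T.stops_depth_add_one hval hhb
  have h1 := T.one_le_stepJ (Nat.le_add_left 1 _) hstop
  have hJ := T.stepJ_le (Nat.le_add_left 1 _) hstop
  rw [T.surplus_eq hV hhb.1 h1 hJ, sub_nonneg]
  exact T.sum_Icc_sum_R_le_pauc hval hsel hJ
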